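/- arXiv:2011.12604 — 3 statements merged into one kernel-verified Lean document; each statement's English description precedes it below -/
import Mathlib

section
/- Let X ⊆ R^d be compact and f : X → R lower semicontinuous, and let f̃ be its convexification on conv(X). Then both f and f̃ attain their minima (on X and conv(X) respectively), and min_{x ∈ conv(X)} f̃(x) = min_{x ∈ X} f(x). -/
def convexifySet (d : ℕ) (X : Set (EuclideanSpace ℝ (Fin d)))
    (f : EuclideanSpace ℝ (Fin d) → ℝ) (x : EuclideanSpace ℝ (Fin d)) : Set ℝ :=
  {r | ∃ (α : Fin (d + 1) → ℝ) (z : Fin (d + 1) → EuclideanSpace ℝ (Fin d)),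
    (∀ k, 0 ≤ α k) ∧ (∑ k, α k = 1) ∧ (∀ k, z k ∈ X) ∧
    (∑ k, α k • z k = x) ∧ r = ∑ k, α k * f (z k)}

noncomputable def convexify (d : ℕ) (X : Set (EuclideanSpace ℝ (Fin d)))
    (f : EuclideanSpace ℝ (Fin d) → ℝ) (x : EuclideanSpace ℝ (Fin d)) : ℝ :=
  sInf (convexifySet d X f x)

/-!
A lower semicontinuous `f` attains its minimum `m = f x₀` on the compact set `X`. Every convex
combination `∑ αₖ f(zₖ)` with `zₖ ∈ X` is at least `m`, so `f̃ ≥ m` on `conv X`; this needs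
Carathéodory's theorem, since `f̃(x)` is an infimum of reals and would take the junk value `0` if no
combination of `d + 1` points of `X` represented `x`. Conversely the trivial combination
`x₀ = 1 • x₀` gives `f̃(x₀) ≤ m`, so `x₀` also minimizes `f̃` and both minima equal `m`.
-/

open Finset Module

theorem IsMinOn.csInf_image_eq {α β : Type*} [ConditionallyCompleteLinearOrder β]
    {f : α → β} {s : Set α} {a : α} (h : IsMinOn f s a) (ha : a ∈ s) :
    sInf (f '' s) = f a :=
  IsLeast.csInf_eq ⟨Set.mem_image_of_mem f ha, Set.forall_mem_image.2 h⟩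

theorem exists_fin_finrank_succ_convex_combination_of_mem_convexHull
    {𝕜 E : Type*} [Field 𝕜] [LinearOrder 𝕜] [IsStrictOrderedRing 𝕜]
    [AddCommGroup E] [Module 𝕜 E] [FiniteDimensional 𝕜 E] {s : Set E} {x : E}
    (hx : x ∈ convexHull 𝕜 s) :
    ∃ (w : Fin (finrank 𝕜 E + 1) → 𝕜) (z : Fin (finrank 𝕜 E + 1) → E),
      (∀ k, 0 ≤ w k) ∧ ∑ k, w k = 1 ∧ (∀ k, z k ∈ s) ∧ ∑ k, w k • z k = x := by
  obtain ⟨x₀, hx₀⟩ := convexHull_nonempty_iff.mp ⟨x, hx⟩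
  obtain ⟨ι, _, z, w, hzs, hz, hw, hw₁, hwz⟩ := eq_pos_convex_span_of_mem_convexHull hx
  have hcard : Fintype.card ι ≤ Fintype.card (Fin (finrank 𝕜 E + 1)) := by
    simpa using hz.card_le_finrank_succ.trans
      (Nat.succ_le_succ (Submodule.finrank_le (vectorSpan 𝕜 (Set.range z))))
  obtain ⟨e⟩ := Function.Embedding.nonempty_of_card_le hcard
  have hw_off : ∀ k ∉ Set.range e, Function.extend e w 0 k = 0 := fun k hk =>
    Function.extend_apply' _ _ k (by simpa using hk)
  refine ⟨Function.extend e w 0, Function.extend e z fun _ => x₀, fun k => ?_, ?_, fun k => ?_, ?_⟩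
  · by_cases hk : k ∈ Set.range e
    · obtain ⟨i, rfl⟩ := hk
      simpa [e.injective.extend_apply] using (hw i).le
    · rw [hw_off k hk]
  · rw [← hw₁]
    exact (Fintype.sum_of_injective e e.injective w _ hw_off
      fun i => (e.injective.extend_apply w 0 i).symm).symm
  · by_cases hk : k ∈ Set.range e
    · obtain ⟨i, rfl⟩ := hk
      rw [e.injective.extend_apply]
      exact hzs ⟨i, rfl⟩
    · rw [Function.extend_apply' _ _ k (by simpa using hk)]
      exact hx₀
  · rw [← hwz]
    refine (Fintype.sum_of_injective e e.injective _ _ (fun k hk => ?_) fun i => ?_).symm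
    · rw [hw_off k hk, zero_smul]
    · rw [e.injective.extend_apply, e.injective.extend_apply]

section Convexify

variable {d : ℕ} {X : Set (EuclideanSpace ℝ (Fin d))} {f : EuclideanSpace ℝ (Fin d) → ℝ}
  {x : EuclideanSpace ℝ (Fin d)}

theorem convexifySet_nonempty (hx : x ∈ convexHull ℝ X) : (convexifySet d X f x).Nonempty := by
  have h := exists_fin_finrank_succ_convex_combination_of_mem_convexHull hx
  rw [finrank_euclideanSpace_fin] at h
  obtain ⟨α, z, hα, hα₁, hzX, hαz⟩ := h
  exact ⟨_, α, z, hα, hα₁, hzX, hαz, rfl⟩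

theorem mem_convexifySet_self (hx : x ∈ X) : f x ∈ convexifySet d X f x :=
  ⟨Pi.single 0 1, fun _ => x, fun k => by by_cases hk : k = 0 <;> simp [hk], by simp,
    fun _ => hx, by simp [Pi.single_apply], by simp [Pi.single_apply]⟩

theorem le_of_mem_convexifySet {m r : ℝ} (hm : ∀ z ∈ X, m ≤ f z)
    (hr : r ∈ convexifySet d X f x) : m ≤ r := by
  obtain ⟨α, z, hα, hα₁, hzX, -, rfl⟩ := hr
  calc m = ∑ k, α k * m := by rw [← Finset.sum_mul, hα₁, one_mul]
    _ ≤ ∑ k, α k * f (z k) :=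
      Finset.sum_le_sum fun k _ => mul_le_mul_of_nonneg_left (hm _ (hzX k)) (hα k)

theorem le_convexify {m : ℝ} (hm : ∀ z ∈ X, m ≤ f z) (hx : x ∈ convexHull ℝ X) :
    m ≤ convexify d X f x :=
  le_csInf (convexifySet_nonempty hx) fun _ => le_of_mem_convexifySet hm

theorem convexify_le {m : ℝ} (hm : ∀ z ∈ X, m ≤ f z) (hx : x ∈ X) :
    convexify d X f x ≤ f x :=
  csInf_le ⟨m, fun _ => le_of_mem_convexifySet hm⟩ (mem_convexifySet_self hx)

theorem IsMinOn.isMinOn_convexify (h : IsMinOn f X x) (hx : x ∈ X) :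
    IsMinOn (convexify d X f) (convexHull ℝ X) x := fun _ hy =>
  (convexify_le h hx).trans (le_convexify h hy)

end Convexify

/-- `f` and its convexification `f̃` attain their minima on `X` and `conv(X)`
respectively, and the minima coincide. -/
theorem convexification_min_eq (d : ℕ) (X : Set (EuclideanSpace ℝ (Fin d)))
    (hX : IsCompact X) (hne : X.Nonempty) (f : EuclideanSpace ℝ (Fin d) → ℝ)
    (hf : LowerSemicontinuousOn f X) :
    (∃ x ∈ X, ∀ y ∈ X, f x ≤ f y) ∧
    (∃ x ∈ convexHull ℝ X, ∀ y ∈ convexHull ℝ X, convexify d X f x ≤ convexify d X f y) ∧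
    sInf (convexify d X f '' convexHull ℝ X) = sInf (f '' X) := by
  obtain ⟨x₀, hx₀, hmin⟩ := hf.exists_isMinOn hne hX
  have hx₀_hull : x₀ ∈ convexHull ℝ X := subset_convexHull ℝ X hx₀
  have hmin_conv := hmin.isMinOn_convexify hx₀
  refine ⟨⟨x₀, hx₀, hmin⟩, ⟨x₀, hx₀_hull, hmin_conv⟩, ?_⟩
  rw [hmin_conv.csInf_image_eq hx₀_hull, hmin.csInf_image_eq hx₀]
  exact le_antisymm (convexify_le hmin hx₀) (le_convexify hmin hx₀_hull)
end

section
/- Let X ⊆ R^d be compact, f : X → R lower semicontinuous, f̃ its convexification, and x̃ ∈ conv(X). If (z^1, ..., z^{d+1}, α) is a generator for x̃ (i.e., achieves the minimum in the definition of f̃(x̃)), then f(z^k) = f̃(z^k) for every k with α^k > 0. -/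
lemma exists_lowerBound {d : ℕ} {X : Set (EuclideanSpace ℝ (Fin d))} (hX : IsCompact X)
    {f : EuclideanSpace ℝ (Fin d) → ℝ} (hf : LowerSemicontinuousOn f X) :
    ∃ m : ℝ, ∀ y ∈ X, m ≤ f y := by
  refine hX.induction_on (p := fun s => ∃ m : ℝ, ∀ y ∈ s, m ≤ f y) ⟨0, by simp⟩
    (fun s t hst ⟨m, hm⟩ => ⟨m, fun y hy => hm y (hst hy)⟩) ?_ ?_
  · rintro s t ⟨m₁, hm₁⟩ ⟨m₂, hm₂⟩
    exact ⟨min m₁ m₂, fun y hy => hy.elim (fun h => (min_le_left _ _).trans (hm₁ y h))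
      (fun h => (min_le_right _ _).trans (hm₂ y h))⟩
  · intro x hx
    exact ⟨{y | f x - 1 < f y}, hf x hx (f x - 1) (by linarith),
      ⟨f x - 1, fun y hy => le_of_lt hy⟩⟩

lemma bddBelow_convexifySet {d : ℕ} {X : Set (EuclideanSpace ℝ (Fin d))} (hX : IsCompact X)
    {f : EuclideanSpace ℝ (Fin d) → ℝ} (hf : LowerSemicontinuousOn f X)
    (x : EuclideanSpace ℝ (Fin d)) : BddBelow (convexifySet d X f x) := by
  obtain ⟨m, hm⟩ := exists_lowerBound hX hf
  refine ⟨m, fun r hr => ?_⟩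
  obtain ⟨α, z, hα0, hα1, hzX, -, rfl⟩ := hr
  calc m = ∑ k, α k * m := by rw [← Finset.sum_mul, hα1, one_mul]
  _ ≤ ∑ k, α k * f (z k) :=
    Finset.sum_le_sum fun k _ => mul_le_mul_of_nonneg_left (hm _ (hzX k)) (hα0 k)

lemma self_mem_convexifySet {d : ℕ} {X : Set (EuclideanSpace ℝ (Fin d))}
    (f : EuclideanSpace ℝ (Fin d) → ℝ) {x : EuclideanSpace ℝ (Fin d)} (hx : x ∈ X) :
    f x ∈ convexifySet d X f x := by
  refine ⟨fun k => if k = 0 then 1 else 0, fun _ => x, ?_, ?_, fun _ => hx, ?_, ?_⟩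
  · intro k; dsimp only; split <;> norm_num
  · simp
  · rw [← Finset.sum_smul]; simp
  · rw [← Finset.sum_mul]; simp

lemma convexify_le_combo' {d : ℕ} {X : Set (EuclideanSpace ℝ (Fin d))} (hX : IsCompact X)
    {f : EuclideanSpace ℝ (Fin d) → ℝ} (hf : LowerSemicontinuousOn f X) :
    ∀ (n : ℕ) (ι : Type) (_ : Fintype ι), Fintype.card ι = n →
    ∀ (β : ι → ℝ) (w : ι → EuclideanSpace ℝ (Fin d)) (x : EuclideanSpace ℝ (Fin d)),
      (∀ i, 0 ≤ β i) → (∑ i, β i = 1) → (∀ i, w i ∈ X) → (∑ i, β i • w i = x) →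
      convexify d X f x ≤ ∑ i, β i * f (w i) := by
  intro n
  induction n using Nat.strong_induction_on with
  | _ n IH =>
  intro ι inst hcard β w x hβ0 hβ1 hwX hx
  classical
  have hne : Nonempty ι := by
    by_contra h
    rw [not_nonempty_iff] at h
    simp at hβ1
  obtain ⟨i₁⟩ := hne
  by_cases hn : n ≤ d + 1
  · -- pad to Fin (d+1)
    have hcard2 : Fintype.card (ι ⊕ Fin (d + 1 - n)) = Fintype.card (Fin (d + 1)) := by
      simp [hcard]; omega
    set e : (ι ⊕ Fin (d + 1 - n)) ≃ Fin (d + 1) := Fintype.equivOfCardEq hcard2 with he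
    set γ : ι ⊕ Fin (d + 1 - n) → ℝ := Sum.elim β (fun _ => 0) with hγ
    set p : ι ⊕ Fin (d + 1 - n) → EuclideanSpace ℝ (Fin d) :=
      Sum.elim w (fun _ => w i₁) with hp
    have hcomp : ∀ (M : Type) (_ : AddCommMonoid M) (g : ι ⊕ Fin (d + 1 - n) → M),
        ∑ k, g (e.symm k) = ∑ j, g j := fun M _ g => Equiv.sum_comp e.symm g
    have hmem : (∑ i, β i * f (w i)) ∈ convexifySet d X f x := by
      refine ⟨fun k => γ (e.symm k), fun k => p (e.symm k), ?_, ?_, ?_, ?_, ?_⟩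
      · intro k
        rcases h : e.symm k with i | i <;> simp [h, hγ, hβ0]
      · rw [hcomp ℝ inferInstance γ]
        simp [hγ, Fintype.sum_sum_type, hβ1]
      · intro k
        rcases h : e.symm k with i | i <;> simp [h, hp, hwX]
      · rw [hcomp (EuclideanSpace ℝ (Fin d)) inferInstance (fun j => γ j • p j)]
        simpa [hγ, hp, Fintype.sum_sum_type] using hx
      · rw [hcomp ℝ inferInstance (fun j => γ j * f (p j))]
        simp [hγ, hp, Fintype.sum_sum_type]
    exact csInf_le (bddBelow_convexifySet hX hf x) hmem
  · -- n ≥ d + 2 : reduce by one point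
    push_neg at hn
    have hdep : ¬ AffineIndependent ℝ w := by
      intro h
      have h1 := h.card_le_finrank_succ
      have h2 : Module.finrank ℝ (vectorSpan ℝ (Set.range w)) ≤ d := by
        have := Submodule.finrank_le (vectorSpan ℝ (Set.range w))
        simpa using this
      omega
    rw [affineIndependent_iff] at hdep
    push_neg at hdep
    obtain ⟨s, c₀, hc₀sum, hc₀comb, j, hjs, hj⟩ := hdep
    set c₁ : ι → ℝ := fun i => if i ∈ s then c₀ i else 0 with hc₁
    have hc₁sum : ∑ i, c₁ i = 0 := by
      rw [hc₁]; simp only [Finset.sum_ite_mem, Finset.univ_inter]; exact hc₀sum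
    have hc₁comb : ∑ i, c₁ i • w i = 0 := by
      have h1 : ∀ i ∈ Finset.univ, c₁ i • w i = if i ∈ s then c₀ i • w i else 0 := by
        intro i _
        by_cases h : i ∈ s <;> simp [hc₁, h]
      rw [Finset.sum_congr rfl h1]
      simp only [Finset.sum_ite_mem, Finset.univ_inter]
      exact hc₀comb
    have hc₁j : c₁ j ≠ 0 := by rw [hc₁]; simpa [hjs] using hj
    obtain ⟨c, hcsum, hccomb, hcj, hcf⟩ :
        ∃ c : ι → ℝ, ∑ i, c i = 0 ∧ ∑ i, c i • w i = 0 ∧ c j ≠ 0 ∧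
          ∑ i, c i * f (w i) ≤ 0 := by
      rcases le_or_gt (∑ i, c₁ i * f (w i)) 0 with h | h
      · exact ⟨c₁, hc₁sum, hc₁comb, hc₁j, h⟩
      · refine ⟨-c₁, by simp [hc₁sum], by simp [hc₁comb], by simpa using hc₁j, ?_⟩
        simp only [Pi.neg_apply, neg_mul]
        rw [Finset.sum_neg_distrib]
        linarith
    have hTne : ∃ i, c i < 0 := by
      by_contra h
      push_neg at h
      have := (Finset.sum_eq_zero_iff_of_nonneg (fun i _ => h i)).mp hcsum
      exact hcj (this j (Finset.mem_univ j))
    set T : Finset ι := Finset.univ.filter (fun i => c i < 0) with hT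
    have hTne' : T.Nonempty := by
      obtain ⟨i, hi⟩ := hTne
      exact ⟨i, by simp [hT, hi]⟩
    obtain ⟨i0, hi0T, hi0⟩ := T.exists_mem_eq_inf' hTne' (fun i => β i / (-c i))
    have hci0 : c i0 < 0 := by
      have := hi0T; rw [hT] at this; simpa using this
    obtain ⟨t, ht0, hti0, htnn⟩ :
        ∃ t : ℝ, 0 ≤ t ∧ β i0 + t * c i0 = 0 ∧ ∀ i, 0 ≤ β i + t * c i := by
      have hcc : -c i0 ≠ 0 := ne_of_gt (by linarith)
      refine ⟨β i0 / (-c i0), div_nonneg (hβ0 i0) (by linarith), ?_, ?_⟩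
      · calc β i0 + β i0 / -c i0 * c i0 = β i0 - β i0 / -c i0 * (-c i0) := by ring
          _ = β i0 - β i0 := by rw [div_mul_cancel₀ _ hcc]
          _ = 0 := by ring
      intro i
      rcases le_or_gt 0 (c i) with h | h
      · have := mul_nonneg (div_nonneg (hβ0 i0) (by linarith : (0:ℝ) ≤ -c i0)) h
        linarith [hβ0 i]
      · have h1 : β i0 / (-c i0) ≤ β i / (-c i) := by
          rw [← hi0]
          exact Finset.inf'_le _ (by simp [hT, h])
        have h2 : (β i0 / (-c i0)) * (-c i) ≤ β i :=
          (le_div_iff₀ (by linarith)).mp h1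
        nlinarith
    set β' : ι → ℝ := fun i => β i + t * c i with hβ'
    have hβ'0 : ∀ i, 0 ≤ β' i := htnn
    have hβ'i0 : β' i0 = 0 := hti0
    have hβ'sum : ∑ i, β' i = 1 := by
      rw [hβ']
      rw [Finset.sum_add_distrib, ← Finset.mul_sum, hcsum, hβ1]; ring
    have hβ'comb : ∑ i, β' i • w i = x := by
      have : ∀ i ∈ Finset.univ, β' i • w i = β i • w i + t • (c i • w i) := by
        intro i _
        rw [hβ']
        simp only [add_smul, mul_smul]
      rw [Finset.sum_congr rfl this, Finset.sum_add_distrib, ← Finset.smul_sum, hccomb, hx]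
      simp
    have hβ'val : ∑ i, β' i * f (w i) ≤ ∑ i, β i * f (w i) := by
      have : ∀ i ∈ Finset.univ, β' i * f (w i) = β i * f (w i) + t * (c i * f (w i)) := by
        intro i _; rw [hβ']; ring
      rw [Finset.sum_congr rfl this, Finset.sum_add_distrib, ← Finset.mul_sum]
      nlinarith [mul_nonpos_of_nonneg_of_nonpos ht0 hcf]
    have hcard' : Fintype.card {i : ι // i ≠ i0} = n - 1 := by
      rw [Fintype.card_subtype_compl, Fintype.card_subtype_eq, hcard]
    have hsplit : ∀ (M : Type) (_ : AddCommMonoid M) (g : ι → M),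
        ∑ i, g i = g i0 + ∑ i : {i : ι // i ≠ i0}, g i.1 := by
      intro M _ g
      rw [← Finset.add_sum_erase Finset.univ g (Finset.mem_univ i0)]
      congr 1
      have h : ∑ i ∈ Finset.univ.erase i0, g i = ∑ i : {i : ι // i ≠ i0}, g i.1 :=
        Finset.sum_subtype (Finset.univ.erase i0)
          (fun i => by simp [Finset.mem_erase]) g
      exact h
    have hb1 : ∑ i : {i : ι // i ≠ i0}, β' i.1 = 1 := by
      have h := hsplit ℝ inferInstance β'
      rw [hβ'i0, zero_add] at h
      rw [← h]; exact hβ'sum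
    have hb2 : ∑ i : {i : ι // i ≠ i0}, β' i.1 • w i.1 = x := by
      have h := hsplit (EuclideanSpace ℝ (Fin d)) inferInstance (fun i => β' i • w i)
      rw [hβ'i0] at h
      simp only [zero_smul, zero_add] at h
      rw [← h]; exact hβ'comb
    have key := IH (n - 1) (by omega) {i : ι // i ≠ i0} inferInstance hcard'
      (fun i => β' i.1) (fun i => w i.1) x
      (fun i => hβ'0 i.1) hb1 (fun i => hwX i.1) hb2
    refine key.trans (le_trans (le_of_eq ?_) hβ'val)
    have h := hsplit ℝ inferInstance (fun i => β' i * f (w i))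
    rw [hβ'i0] at h
    simp only [zero_mul, zero_add] at h
    exact h.symm

/-- If `(z, α)` is a generator for `xt`, then `f(z^k) = f̃(z^k)` for every `k`
with `α^k > 0`. -/
theorem generator_f_eq_convexify (d : ℕ) (X : Set (EuclideanSpace ℝ (Fin d)))
    (hX : IsCompact X) (f : EuclideanSpace ℝ (Fin d) → ℝ)
    (hf : LowerSemicontinuousOn f X)
    (xt : EuclideanSpace ℝ (Fin d)) (hxt : xt ∈ convexHull ℝ X)
    (α : Fin (d + 1) → ℝ) (z : Fin (d + 1) → EuclideanSpace ℝ (Fin d))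
    (hα0 : ∀ k, 0 ≤ α k) (hα1 : ∑ k, α k = 1) (hzX : ∀ k, z k ∈ X)
    (hcomb : ∑ k, α k • z k = xt)
    (hgen : ∑ k, α k * f (z k) = convexify d X f xt) :
    ∀ k, 0 < α k → f (z k) = convexify d X f (z k) := by
  classical
  intro j hj
  have hle : convexify d X f (z j) ≤ f (z j) :=
    csInf_le (bddBelow_convexifySet hX hf (z j)) (self_mem_convexifySet f (hzX j))
  refine le_antisymm ?_ hle
  by_contra hlt
  push_neg at hlt
  have hne : (convexifySet d X f (z j)).Nonempty := ⟨_, self_mem_convexifySet f (hzX j)⟩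
  obtain ⟨r, hrmem, hr⟩ := exists_lt_of_csInf_lt hne hlt
  obtain ⟨β, w, hβ0, hβ1, hwX, hwcomb, rfl⟩ := hrmem
  -- combine the two representations
  have hif : ∀ (g : Fin (d + 1) → ℝ),
      ∑ k, (if k = j then 0 else g k) = (∑ k, g k) - g j := by
    intro g
    have h1 : ∀ k ∈ Finset.univ,
        (if k = j then (0:ℝ) else g k) = g k - (if k = j then g k else 0) := by
      intro k _; split <;> ring
    rw [Finset.sum_congr rfl h1, Finset.sum_sub_distrib,
      Finset.sum_ite_eq' Finset.univ j g]
    simp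
  have hifv : ∑ k, (if k = j then (0:ℝ) else α k) • z k
      = (∑ k, α k • z k) - α j • z j := by
    have h1 : ∀ k ∈ Finset.univ, (if k = j then (0:ℝ) else α k) • z k
        = α k • z k - (if k = j then α k • z k else 0) := by
      intro k _; split <;> simp
    rw [Finset.sum_congr rfl h1, Finset.sum_sub_distrib,
      Finset.sum_ite_eq' Finset.univ j (fun k => α k • z k)]
    simp
  have key := convexify_le_combo' hX hf (Fintype.card (Fin (d + 1) ⊕ Fin (d + 1)))
    (Fin (d + 1) ⊕ Fin (d + 1)) inferInstance rfl
    (Sum.elim (fun k => if k = j then 0 else α k) (fun i => α j * β i))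
    (Sum.elim z w) xt
    (by
      rintro (i | i)
      · dsimp only [Sum.elim_inl]; split
        · exact le_rfl
        · exact hα0 i
      · exact mul_nonneg hj.le (hβ0 i))
    (by
      rw [Fintype.sum_sum_type]
      simp only [Sum.elim_inl, Sum.elim_inr]
      rw [hif α, ← Finset.mul_sum, hβ1, hα1]
      ring)
    (by rintro (i | i) <;> simp [hzX, hwX])
    (by
      rw [Fintype.sum_sum_type]
      simp only [Sum.elim_inl, Sum.elim_inr]
      have h2 : ∑ i, (α j * β i) • w i = α j • z j := by
        have : ∀ i ∈ Finset.univ, (α j * β i) • w i = α j • (β i • w i) := by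
          intro i _; rw [mul_smul]
        rw [Finset.sum_congr rfl this, ← Finset.smul_sum, hwcomb]
      rw [hifv, h2, hcomb]
      abel)
  have hval : ∑ i, Sum.elim (fun k => if k = j then 0 else α k) (fun i => α j * β i) i
      * f (Sum.elim z w i) < convexify d X f xt := by
    rw [Fintype.sum_sum_type]
    simp only [Sum.elim_inl, Sum.elim_inr]
    have h3 : ∑ k, (if k = j then (0:ℝ) else α k) * f (z k)
        = (∑ k, α k * f (z k)) - α j * f (z j) := by
      have h1 : ∀ k ∈ Finset.univ, (if k = j then (0:ℝ) else α k) * f (z k)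
          = (if k = j then (0:ℝ) else α k * f (z k)) := by
        intro k _; split <;> ring
      rw [Finset.sum_congr rfl h1, hif (fun k => α k * f (z k))]
    have h4 : ∑ i, (α j * β i) * f (w i) = α j * ∑ i, β i * f (w i) := by
      rw [Finset.mul_sum]
      exact Finset.sum_congr rfl fun i _ => by ring
    rw [h3, h4, ← hgen]
    have h5 : α j * (∑ i, β i * f (w i)) < α j * f (z j) :=
      mul_lt_mul_of_pos_left hr hj
    linarith
  exact absurd (key.trans_lt hval) (lt_irrefl _)
end

section
/- Let X ⊆ R^d be compact, f : X → R lower semicontinuous, f̃ its convexification, x̃ ∈ conv(X), and let (z^1, ..., z^{d+1}, α) be a generator for x̃. Then for every h in the subdifferential ∂f̃(x̃), and every k with α^k > 0, one has f̃(z^k) = f̃(x̃) + ⟨h, z^k − x̃⟩. -/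
open scoped RealInnerProductSpace

/-- A lower semicontinuous function on a compact set is bounded below. -/
lemma lsc_bddBelow {d : ℕ} {X : Set (EuclideanSpace ℝ (Fin d))}
    (hX : IsCompact X) {f : EuclideanSpace ℝ (Fin d) → ℝ}
    (hf : LowerSemicontinuousOn f X) : ∃ m : ℝ, ∀ x ∈ X, m ≤ f x := by
  refine hX.induction_on (p := fun s => ∃ m : ℝ, ∀ x ∈ s, m ≤ f x) ⟨0, by simp⟩ ?_ ?_ ?_
  · rintro s t hst ⟨m, hm⟩
    exact ⟨m, fun x hx => hm x (hst hx)⟩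
  · rintro s t ⟨m, hm⟩ ⟨m', hm'⟩
    exact ⟨min m m', fun x hx => hx.elim
      (fun h => le_trans (min_le_left _ _) (hm x h))
      (fun h => le_trans (min_le_right _ _) (hm' x h))⟩
  · intro x hx
    have := hf x hx (f x - 1) (by linarith)
    exact ⟨{x' | f x - 1 < f x'}, this, f x - 1, fun y hy => le_of_lt hy⟩

/-- For any subgradient `h` of `f̃` at `xt` and any generator `(z, α)` of `xt`,
`f̃(z^k) = f̃(xt) + ⟨h, z^k − xt⟩` for every `k` with `α^k > 0`. -/
theorem generator_subgradient_eq (d : ℕ) (X : Set (EuclideanSpace ℝ (Fin d)))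
    (hX : IsCompact X) (f : EuclideanSpace ℝ (Fin d) → ℝ)
    (hf : LowerSemicontinuousOn f X)
    (xt : EuclideanSpace ℝ (Fin d)) (hxt : xt ∈ convexHull ℝ X)
    (α : Fin (d + 1) → ℝ) (z : Fin (d + 1) → EuclideanSpace ℝ (Fin d))
    (hα0 : ∀ k, 0 ≤ α k) (hα1 : ∑ k, α k = 1) (hzX : ∀ k, z k ∈ X)
    (hcomb : ∑ k, α k • z k = xt)
    (hgen : ∑ k, α k * f (z k) = convexify d X f xt)
    (h : EuclideanSpace ℝ (Fin d))
    (hsub : ∀ y ∈ convexHull ℝ X,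
      convexify d X f xt + ⟪h, y - xt⟫ ≤ convexify d X f y) :
    ∀ k, 0 < α k →
      convexify d X f (z k) = convexify d X f xt + ⟪h, z k - xt⟫ := by
  obtain ⟨m, hm⟩ := lsc_bddBelow hX hf
  -- the convexification set is bounded below by m everywhere
  have hbdd : ∀ y, BddBelow (convexifySet d X f y) := by
    intro y
    refine ⟨m, ?_⟩
    rintro r ⟨β, w, hβ0, hβ1, hwX, -, rfl⟩
    calc m = ∑ j, β j * m := by rw [← Finset.sum_mul, hβ1, one_mul]
    _ ≤ ∑ j, β j * f (w j) :=
      Finset.sum_le_sum fun j _ => mul_le_mul_of_nonneg_left (hm _ (hwX j)) (hβ0 j)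
  -- f̃ ≤ f on X
  have hle : ∀ w ∈ X, convexify d X f w ≤ f w := by
    intro w hw
    apply csInf_le (hbdd w)
    refine ⟨fun j => if j = 0 then 1 else 0, fun _ => w, ?_, ?_, fun _ => hw, ?_, ?_⟩
    · intro j; dsimp only; split <;> norm_num
    · simp
    · simp [ite_smul]
    · simp [ite_mul]
  have hA : ∀ j, convexify d X f xt + ⟪h, z j - xt⟫ ≤ convexify d X f (z j) :=
    fun j => hsub _ (subset_convexHull ℝ X (hzX j))
  have hB : ∑ j, α j * convexify d X f (z j) ≤ convexify d X f xt := by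
    rw [← hgen]
    exact Finset.sum_le_sum fun j _ => mul_le_mul_of_nonneg_left (hle _ (hzX j)) (hα0 j)
  have hzero : ∑ j, α j • (z j - xt) = (0 : EuclideanSpace ℝ (Fin d)) := by
    simp only [smul_sub, Finset.sum_sub_distrib, hcomb, ← Finset.sum_smul, hα1, one_smul,
      sub_self]
  have hsum0 : ∑ j, α j * (convexify d X f xt + ⟪h, z j - xt⟫) = convexify d X f xt := by
    have hinner : ∑ j, α j * ⟪h, z j - xt⟫ = (0 : ℝ) := by
      have : ∑ j, α j * ⟪h, z j - xt⟫ = ⟪h, ∑ j, α j • (z j - xt)⟫ := by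
        rw [inner_sum]
        exact Finset.sum_congr rfl fun j _ => (real_inner_smul_right h _ (α j)).symm
      rw [this, hzero, inner_zero_right]
    calc ∑ j, α j * (convexify d X f xt + ⟪h, z j - xt⟫)
        = ∑ j, (α j * convexify d X f xt + α j * ⟪h, z j - xt⟫) := by
          exact Finset.sum_congr rfl fun j _ => mul_add _ _ _
      _ = (∑ j, α j) * convexify d X f xt + ∑ j, α j * ⟪h, z j - xt⟫ := by
          rw [Finset.sum_add_distrib, Finset.sum_mul]
      _ = convexify d X f xt := by rw [hα1, one_mul, hinner, add_zero]
  have hterm : ∀ j ∈ Finset.univ,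
      0 ≤ α j * (convexify d X f (z j) - (convexify d X f xt + ⟪h, z j - xt⟫)) :=
    fun j _ => mul_nonneg (hα0 j) (by linarith [hA j])
  have hsumle : ∑ j, α j * (convexify d X f (z j) - (convexify d X f xt + ⟪h, z j - xt⟫))
      ≤ 0 := by
    have : ∑ j, α j * (convexify d X f (z j) - (convexify d X f xt + ⟪h, z j - xt⟫))
        = ∑ j, α j * convexify d X f (z j)
          - ∑ j, α j * (convexify d X f xt + ⟪h, z j - xt⟫) := by
      rw [← Finset.sum_sub_distrib]
      exact Finset.sum_congr rfl fun j _ => (mul_sub _ _ _)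
    rw [this, hsum0]
    linarith [hB]
  have hsumeq := le_antisymm hsumle (Finset.sum_nonneg hterm)
  intro k hk
  have hk0 := (Finset.sum_eq_zero_iff_of_nonneg hterm).mp hsumeq k (Finset.mem_univ k)
  rcases mul_eq_zero.mp hk0 with h1 | h2
  · exact absurd h1 (ne_of_gt hk)
  · linarith [sub_eq_zero.mp h2]
end
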